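/- arXiv:1604.00746 — 2 statements merged into one kernel-verified Lean document; each statement's English description precedes it below -/
import Mathlib

section
/- Let R be a commutative ring of characteristic p > 0 and D : R → R a derivation. Then the p-fold composite D^p is again a derivation of R. -/
/-!
By the general Leibniz rule, `D^[n] (a * b) = ∑ (n choose i) D^[i] a * D^[n - i] b`. For `n = p`
every binomial coefficient other than the two outer ones is divisible by `p`, hence zero in `A`,
and only the Leibniz rule for `D^[p]` survives.
-/

open Finset

namespace Derivation

variable {R A : Type*} [CommSemiring R] [CommSemiring A] [Algebra R A] (D : Derivation R A A)

theorem iterate_apply_mul (n : ℕ) (a b : A) :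
    D^[n] (a * b) = ∑ ij ∈ antidiagonal n, n.choose ij.1 • (D^[ij.1] a * D^[ij.2] b) := by
  induction n with
  | zero => simp
  | succ n ih =>
    rw [sum_antidiagonal_choose_succ_nsmul (fun i j => D^[i] a * D^[j] b) n]
    simp only [Function.iterate_succ_apply', ih, map_sum, map_nsmul, leibniz, smul_eq_mul,
      smul_add, sum_add_distrib]
    refine congrArg _ (sum_congr rfl fun ij hij => ?_)
    rw [n.choose_symm_of_eq_add (mem_antidiagonal.1 hij).symm, mul_comm]

theorem iterate_prime_apply_mul {p : ℕ} (hp : p.Prime) [CharP A p] (a b : A) :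
    D^[p] (a * b) = a • D^[p] b + b • D^[p] a := by
  rw [iterate_apply_mul,
    sum_eq_add_of_mem (0, p) (p, 0) (by simp) (by simp) (by simp [hp.ne_zero])]
  · simp [add_comm, mul_comm]
  rintro ⟨i, j⟩ hij ⟨hi0, hip⟩
  rw [HasAntidiagonal.mem_antidiagonal] at hij
  simp only [ne_eq, Prod.mk.injEq] at hi0 hip
  have hdvd : p ∣ p.choose i := hp.dvd_choose_self (by omega) (by omega)
  rw [nsmul_eq_mul, (CharP.cast_eq_zero_iff A p _).2 hdvd, zero_mul]

def iteratePrime {p : ℕ} (hp : p.Prime) [CharP A p] : Derivation R A A where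
  toLinearMap := D.toLinearMap ^ p
  map_one_eq_zero' := by
    rw [Module.End.coe_pow, coeFn_coe, ← Nat.succ_pred_eq_of_pos hp.pos,
      Function.iterate_succ_apply, map_one_eq_zero, iterate_map_zero]
  leibniz' a b := by
    simpa only [Module.End.coe_pow, coeFn_coe] using D.iterate_prime_apply_mul hp a b

@[simp]
theorem coe_iteratePrime {p : ℕ} (hp : p.Prime) [CharP A p] : ⇑(D.iteratePrime hp) = D^[p] :=
  Module.End.coe_pow _ _

end Derivation

/-- For a commutative ring `R` of prime characteristic `p` and a derivation
`D : R → R`, the p-fold composite `D^p` is again a derivation of `R`. -/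
theorem iterate_p_derivation
    (R : Type*) [CommRing R] (p : ℕ) (hp : p.Prime) [CharP R p]
    (D : Derivation ℤ R R) :
    ∃ D' : Derivation ℤ R R, ⇑D' = (⇑D)^[p] :=
  ⟨D.iteratePrime hp, D.coe_iteratePrime hp⟩
end

section
/- Let K be a field of characteristic p > 0 and D : K → K a nonzero derivation with field of constants K^D = ker D. Viewing D as a K^D-linear endomorphism of K, its minimal polynomial over K^D is a p-polynomial, i.e., of the form t^{p^m} + Σ_{i=0}^{m-1} a_i t^{p^i} with a_i ∈ K^D. -/
open Polynomial Finset

open Nat in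
lemma isPPow_of_choose_dvd (p : ℕ) [hp : Fact p.Prime] :
    ∀ i : ℕ, 1 ≤ i → (∀ k, 1 ≤ k → k < i → p ∣ i.choose k) → ∃ v, i = p ^ v := by
  intro i
  induction i using Nat.strong_induction_on with
  | _ i IH =>
    intro hi h
    rcases eq_or_lt_of_le hi with h1 | h2
    · exact ⟨0, by simpa using h1.symm⟩
    have hp2 := hp.out.two_le
    have hplt : p ≤ i := by
      by_contra hip
      push_neg at hip
      have := h 1 le_rfl h2
      simp only [Nat.choose_one_right] at this
      exact absurd (Nat.le_of_dvd (by omega) this) (by omega)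
    have hpdvd : p ∣ i := by
      by_contra hnd
      have hr : i % p ≠ 0 := fun hh => hnd (Nat.dvd_of_mod_eq_zero hh)
      have hrlt : i % p < p := Nat.mod_lt _ hp.out.pos
      have hdvd := h (i % p) (by omega) (by omega)
      have lucas := Choose.choose_modEq_choose_mod_mul_choose_div_nat (n := i) (k := i % p) (p := p)
      rw [Nat.mod_mod_of_dvd _ dvd_rfl, Nat.choose_self, Nat.div_eq_of_lt hrlt,
        Nat.choose_zero_right, one_mul] at lucas
      have h10 : (1 : ℕ) ≡ 0 [MOD p] := lucas.symm.trans ((Nat.modEq_zero_iff_dvd).2 hdvd)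
      have := h10.symm
      simp [Nat.ModEq, Nat.mod_eq_of_lt (show 1 < p by omega)] at this
    obtain ⟨q, hq⟩ := hpdvd
    subst hq
    have hq1 : 1 ≤ q := Nat.pos_of_ne_zero fun h0 => by simp [h0] at h2
    have hqlt : q < p * q := by nlinarith
    have hq' : ∀ k, 1 ≤ k → k < q → p ∣ q.choose k := by
      intro k hk1 hk2
      have hdvd := h (p * k) (Nat.mul_pos hp.out.pos hk1) ((Nat.mul_lt_mul_left hp.out.pos).2 hk2)
      have lucas := Choose.choose_modEq_choose_mod_mul_choose_div_nat (n := p * q) (k := p * k) (p := p)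
      rw [Nat.mul_mod_right, Nat.mul_mod_right, Nat.choose_zero_right,
        Nat.mul_div_cancel_left _ hp.out.pos, Nat.mul_div_cancel_left _ hp.out.pos, one_mul] at lucas
      have : q.choose k ≡ 0 [MOD p] := lucas.symm.trans ((Nat.modEq_zero_iff_dvd).2 hdvd)
      exact (Nat.modEq_zero_iff_dvd).1 this
    obtain ⟨v, hv⟩ := IH q hqlt hq1 hq'
    exact ⟨v + 1, by rw [hv, pow_succ, mul_comm]⟩

lemma coeff_sum_C_mul_X_pow {K : Type*} [Semiring K] (N : ℕ) (f : ℕ → K) (j : ℕ) :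
    (∑ k ∈ range N, C (f k) * X ^ k).coeff j = if j < N then f j else 0 := by
  rw [finset_sum_coeff]
  simp only [coeff_C_mul, coeff_X_pow, mul_ite, mul_one, mul_zero]
  rw [Finset.sum_ite_eq (range N) j f]
  simp [Finset.mem_range]

lemma coeff_sum_C_mul_X_pow_succ {K : Type*} [Semiring K] (N : ℕ) (f : ℕ → K) (j : ℕ) :
    (∑ k ∈ range N, C (f k) * X ^ (k + 1)).coeff (j + 1) = if j < N then f j else 0 := by
  rw [finset_sum_coeff]
  simp only [coeff_C_mul, coeff_X_pow, mul_ite, mul_one, mul_zero, Nat.add_right_cancel_iff]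
  rw [Finset.sum_ite_eq (range N) j f]
  simp [Finset.mem_range]

lemma tri_swap1 {M : Type*} [AddCommMonoid M] (n : ℕ) (g : ℕ → ℕ → M) :
    ∑ i ∈ range (n + 1), ∑ k ∈ range (i + 1), g i k
      = ∑ k ∈ range (n + 1), ∑ j ∈ range (n + 1 - k), g (k + j) k := by
  rw [Finset.sum_sigma', Finset.sum_sigma']
  refine Finset.sum_nbij' (fun x => ⟨x.2, x.1 - x.2⟩) (fun x => ⟨x.1 + x.2, x.1⟩) ?_ ?_ ?_ ?_ ?_
  · rintro ⟨i, k⟩ hm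
    simp only [Finset.mem_sigma, Finset.mem_range] at hm ⊢
    omega
  · rintro ⟨k, j⟩ hm
    simp only [Finset.mem_sigma, Finset.mem_range] at hm ⊢
    omega
  · rintro ⟨i, k⟩ hm
    simp only [Finset.mem_sigma, Finset.mem_range] at hm
    simp only [Nat.add_sub_cancel' (show k ≤ i by omega)]
  · rintro ⟨k, j⟩ hm
    simp only [Finset.mem_sigma, Finset.mem_range] at hm
    simp only [Nat.add_sub_cancel_left]
  · rintro ⟨i, k⟩ hm
    simp only [Finset.mem_sigma, Finset.mem_range] at hm
    simp only [Nat.add_sub_cancel' (show k ≤ i by omega)]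

lemma tri_swap2 {M : Type*} [AddCommMonoid M] (n : ℕ) (g : ℕ → ℕ → M) :
    ∑ i ∈ range n, ∑ j ∈ range (n - i), g i j
      = ∑ j ∈ range n, ∑ i ∈ range (n - j), g i j := by
  rw [Finset.sum_sigma', Finset.sum_sigma']
  refine Finset.sum_nbij' (fun x => ⟨x.2, x.1⟩) (fun x => ⟨x.2, x.1⟩) ?_ ?_ ?_ ?_ ?_ <;>
    simp only [Finset.mem_sigma, Finset.mem_range, Sigma.forall, Sigma.mk.inj_iff,
      heq_eq_eq, and_imp] <;>
    intros <;> first | omega | (constructor <;> omega) | rfl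

lemma iter_leibniz {K : Type*} [Field K] {F : Subfield K} (D : Derivation ℤ K K)
    (T : K →ₗ[F] K) (hT : ∀ x : K, T x = D x) (n : ℕ) (a x : K) :
    ((T : Module.End F K) ^ n) (a * x)
      = ∑ k ∈ Finset.range (n + 1),
          n.choose k • ((((T : Module.End F K)) ^ k) a * (((T : Module.End F K)) ^ (n - k)) x) := by
  set E : Module.End F K := (T : Module.End F K) with hE
  have hEapp : ∀ y : K, E y = D y := hT
  have hstep : ∀ (m : ℕ) (y : K), (E ^ (m + 1)) y = E ((E ^ m) y) := by
    intro m y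
    rw [pow_succ', Module.End.mul_apply]
  set t : ℕ → ℕ → K := fun n k => n.choose k • ((E ^ k) a * (E ^ (n - k)) x) with ht
  change (E ^ n) (a * x) = ∑ k ∈ range (n + 1), t n k
  induction n with
  | zero => simp [ht]
  | succ n ih =>
    have expand : (E ^ (n + 1)) (a * x)
        = ∑ k ∈ range (n + 1), n.choose k • ((E ^ (k + 1)) a * (E ^ (n - k)) x)
          + ∑ k ∈ range (n + 1), n.choose k • ((E ^ k) a * (E ^ (n - k + 1)) x) := by
      rw [hstep, ih, map_sum, ← sum_add_distrib]
      refine sum_congr rfl fun k hk => ?_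
      rw [map_nsmul, hEapp, Derivation.leibniz, smul_eq_mul, smul_eq_mul,
        ← hEapp, ← hEapp, ← hstep, ← hstep]
      ring
    have hmid : ∀ k ∈ range (n + 1), t (n + 1) (k + 1)
        = n.choose k • ((E ^ (k + 1)) a * (E ^ (n - k)) x)
          + n.choose (k + 1) • ((E ^ (k + 1)) a * (E ^ (n - k)) x) := by
      intro k hk
      simp only [ht]
      rw [Nat.choose_succ_succ, add_smul, Nat.succ_sub_succ]
    have hS2 : ∑ k ∈ range (n + 1), n.choose k • ((E ^ k) a * (E ^ (n - k + 1)) x)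
        = ∑ k ∈ range (n + 1), n.choose (k + 1) • ((E ^ (k + 1)) a * (E ^ (n - k)) x)
          + t (n + 1) 0 := by
      rw [sum_range_succ', sum_range_succ, Nat.choose_succ_self, zero_smul, add_zero]
      congr 1
      · refine sum_congr rfl fun i hi => ?_
        rw [mem_range] at hi
        have h' : n - (i + 1) + 1 = n - i := by omega
        rw [h']
      · simp [ht]
    have goalRHS : ∑ k ∈ range (n + 1 + 1), t (n + 1) k
        = ∑ k ∈ range (n + 1), n.choose k • ((E ^ (k + 1)) a * (E ^ (n - k)) x)
          + ∑ k ∈ range (n + 1), n.choose (k + 1) • ((E ^ (k + 1)) a * (E ^ (n - k)) x)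
          + t (n + 1) 0 := by
      rw [sum_range_succ', sum_congr rfl hmid, sum_add_distrib]
    rw [expand, goalRHS, hS2]
    ring

set_option synthInstance.maxHeartbeats 1000000 in
set_option maxHeartbeats 1000000 in
lemma indep_lemma {K : Type*} [Field K] {F : Subfield K} (D : Derivation ℤ K K)
    (hF : ∀ x : K, x ∈ F ↔ D x = 0)
    (T : K →ₗ[F] K) (hT : ∀ x : K, T x = D x)
    (halg : IsIntegral F (T : Module.End F K)) :
    ∀ (d : ℕ) (q : K[X]), q.natDegree = d
      → q.natDegree < (minpoly F (T : Module.End F K)).natDegree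
      → (∀ x : K, ∑ k ∈ range (minpoly F (T : Module.End F K)).natDegree,
          q.coeff k * (((T : Module.End F K)) ^ k) x = 0)
      → q = 0 := by
  set E : Module.End F K := (T : Module.End F K) with hE
  set n : ℕ := (minpoly F E).natDegree with hn
  have hEapp : ∀ y : K, E y = D y := hT
  have hcomm : ∀ (k : ℕ) (y : K), (E ^ k) (E y) = D ((E ^ k) y) := by
    intro k y
    rw [← Module.End.mul_apply, ← pow_succ, pow_succ', Module.End.mul_apply, hEapp]
  have hn1 : 1 ≤ n := minpoly.natDegree_pos halg
  intro d
  induction d using Nat.strong_induction_on with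
  | _ d IH =>
    intro q hdeg hdn hrel
    by_contra hq0
    have hc : q.leadingCoeff ≠ 0 := leadingCoeff_ne_zero.mpr hq0
    set q' : K[X] := q * C q.leadingCoeff⁻¹ with hq'
    have hq'monic : q'.Monic := monic_mul_leadingCoeff_inv hq0
    have hq'deg : q'.natDegree = d := by
      rw [hq', natDegree_mul_C (inv_ne_zero hc), hdeg]
    have hrel' : ∀ x : K, ∑ k ∈ range n, q'.coeff k * (E ^ k) x = 0 := by
      intro x
      have h2 : ∀ k, q'.coeff k * (E ^ k) x = (q.coeff k * (E ^ k) x) * q.leadingCoeff⁻¹ := by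
        intro k; rw [hq', coeff_mul_C]; ring
      rw [sum_congr rfl fun k _ => h2 k, ← sum_mul, hrel, zero_mul]
    set q'' : K[X] := ∑ k ∈ range n, C (D (q'.coeff k)) * X ^ k with hq''
    have hq''coeff : ∀ j, q''.coeff j = if j < n then D (q'.coeff j) else 0 := fun j =>
      coeff_sum_C_mul_X_pow n _ j
    have hrel'' : ∀ x : K, ∑ k ∈ range n, q''.coeff k * (E ^ k) x = 0 := by
      intro x
      have h1 : ∑ k ∈ range n, q''.coeff k * (E ^ k) x
          = ∑ k ∈ range n, (D (q'.coeff k * (E ^ k) x) - q'.coeff k * (E ^ k) (E x)) := by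
        refine sum_congr rfl fun k hk => ?_
        rw [mem_range] at hk
        rw [hq''coeff, if_pos hk, Derivation.leibniz, smul_eq_mul, smul_eq_mul, hcomm]
        ring
      rw [h1, sum_sub_distrib, ← map_sum, hrel' x, map_zero, hrel' (E x), sub_zero]
    rcases Nat.eq_zero_or_pos d with hd0 | hd1
    · have hq'1 : q' = 1 := hq'monic.natDegree_eq_zero.1 (by rw [hq'deg, hd0])
      have h1 := hrel' 1
      rw [hq'1, Finset.sum_eq_single 0
        (fun b _ hb => by simp [Polynomial.coeff_one, hb])
        (fun h => absurd (Finset.mem_range.mpr hn1) h)] at h1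
      simp at h1
    · have hle : q''.natDegree ≤ d - 1 := by
        rw [natDegree_le_iff_coeff_eq_zero]
        intro mm hmm
        rw [hq''coeff]
        split_ifs with h
        · rcases eq_or_lt_of_le (show d ≤ mm by omega) with hdm | hdm
          · have : q'.coeff mm = 1 := by
              rw [← hdm, ← hq'deg]; exact hq'monic.coeff_natDegree
            rw [this, Derivation.map_one_eq_zero]
          · rw [coeff_eq_zero_of_natDegree_lt (by omega), map_zero]
        · rfl
      have hq''0 : q'' = 0 :=
        IH q''.natDegree (by omega) q'' rfl (by omega) hrel''
      have hcoeffF : ∀ k, q'.coeff k ∈ F := by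
        intro k
        rw [hF]
        by_cases hk : k < n
        · have h := hq''coeff k
          rw [hq''0, coeff_zero, if_pos hk] at h
          exact h.symm
        · rw [coeff_eq_zero_of_natDegree_lt (by omega), map_zero]
      set g : ℕ → F := fun k => ⟨q'.coeff k, hcoeffF k⟩ with hg
      set P : F[X] := ∑ k ∈ range n, C (g k) * X ^ k with hP
      have hPcoeff : ∀ j, P.coeff j = if j < n then g j else 0 := fun j =>
        coeff_sum_C_mul_X_pow n g j
      have hP0 : P ≠ 0 := by
        intro h0
        have h := hPcoeff d
        rw [h0, coeff_zero, if_pos (by omega)] at h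
        have h' := congrArg (Subtype.val) h
        simp only [hg] at h'
        rw [← hq'deg] at h'
        rw [hq'monic.coeff_natDegree] at h'
        simp at h'
      have haevalP : Polynomial.aeval E P = 0 := by
        apply LinearMap.ext
        intro x
        rw [hP, map_sum, LinearMap.sum_apply, LinearMap.zero_apply]
        have h2 : ∀ k, ((Polynomial.aeval E) (C (g k) * X ^ k)) x = q'.coeff k * (E ^ k) x := by
          intro k
          rw [map_mul, aeval_C, aeval_X_pow, Module.End.mul_apply,
            Module.algebraMap_end_apply, Subring.smul_def]
          rfl
        rw [sum_congr rfl fun k _ => h2 k, hrel']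
      have hdvd := minpoly.dvd F E haevalP
      have hub : P.natDegree ≤ n - 1 :=
        natDegree_sum_le_of_forall_le _ _ fun k hk =>
          (natDegree_C_mul_X_pow_le (g k) k).trans (by rw [mem_range] at hk; omega)
      have hlb : n ≤ P.natDegree := Polynomial.natDegree_le_of_dvd hdvd hP0
      omega

set_option synthInstance.maxHeartbeats 1000000 in
set_option maxHeartbeats 4000000 in
/-- The minimal polynomial over the field of constants `K^D` of a nonzero
algebraic derivation `D` of a field `K` of characteristic `p` is a
p-polynomial `t^{p^m} + Σ aᵢ t^{pⁱ}`. -/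
theorem minpoly_derivation_p_polynomial
    (K : Type*) [Field K] (p : ℕ) [Fact p.Prime] [CharP K p]
    (D : Derivation ℤ K K) (hD : D ≠ 0)
    (F : Subfield K) (hF : ∀ x : K, x ∈ F ↔ D x = 0)
    (T : K →ₗ[F] K) (hT : ∀ x : K, T x = D x)
    (halg : IsIntegral F (T : Module.End F K)) :
    ∃ (m : ℕ) (a : Fin m → F),
      minpoly F (T : Module.End F K)
        = Polynomial.X ^ (p ^ m) + ∑ i : Fin m, Polynomial.C (a i) * Polynomial.X ^ (p ^ (i : ℕ)) := by
  classical
  set E : Module.End F K := (T : Module.End F K) with hE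
  set μ : Polynomial F := minpoly F E with hμ
  set n : ℕ := μ.natDegree with hn
  have hEapp : ∀ y : K, E y = D y := hT
  have hn1 : 1 ≤ n := minpoly.natDegree_pos halg
  have hmonic : μ.Monic := minpoly.monic halg
  have haeval_term : ∀ (c : F) (k : ℕ) (x : K),
      ((Polynomial.aeval E) (Polynomial.C c * Polynomial.X ^ k)) x = (c : K) * (E ^ k) x := by
    intro c k x
    rw [map_mul, aeval_C, aeval_X_pow, Module.End.mul_apply,
      Module.algebraMap_end_apply, Subring.smul_def]
    rfl
  have hμrepr : μ = ∑ i ∈ Finset.range (n + 1), Polynomial.C (μ.coeff i) * Polynomial.X ^ i := by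
    conv_lhs => rw [μ.as_sum_range' (n + 1) (by omega)]
    exact Finset.sum_congr rfl fun i _ => (Polynomial.C_mul_X_pow_eq_monomial).symm
  have hrelμ : ∀ x : K, ∑ i ∈ Finset.range (n + 1), (μ.coeff i : K) * (E ^ i) x = 0 := by
    intro x
    have h0 : ((Polynomial.aeval E) μ) x = 0 := by rw [hμ, minpoly.aeval]; rfl
    rw [hμrepr, map_sum, LinearMap.sum_apply] at h0
    rw [← h0]
    exact Finset.sum_congr rfl fun i _ => (haeval_term _ _ _).symm
  have hpow_one : ∀ k, 1 ≤ k → (E ^ k) (1 : K) = 0 := by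
    intro k hk
    obtain ⟨j, rfl⟩ : ∃ j, k = j + 1 := ⟨k - 1, by omega⟩
    rw [pow_succ, Module.End.mul_apply, hEapp, Derivation.map_one_eq_zero, map_zero]
  have hμ0 : μ.coeff 0 = 0 := by
    have h1 := hrelμ 1
    rw [Finset.sum_eq_single 0 (fun b _ hb => by rw [hpow_one b (by omega), mul_zero])
      (fun h => absurd (Finset.mem_range.mpr (by omega)) h)] at h1
    simp only [pow_zero, Module.End.one_apply, mul_one] at h1
    exact_mod_cast h1
  -- the coefficient relations
  have hca : ∀ (a : K) (j : ℕ), j < n →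
      (∑ k ∈ Finset.range (n - j),
        ((k + 1 + j).choose (k + 1) : K) * (μ.coeff (k + 1 + j) : K) * (E ^ (k + 1)) a) = 0 := by
    intro a
    have key : ∀ x : K, ∑ j ∈ Finset.range n,
        (∑ k ∈ Finset.range (n - j),
          ((k + 1 + j).choose (k + 1) : K) * (μ.coeff (k + 1 + j) : K) * (E ^ (k + 1)) a)
          * (E ^ j) x = 0 := by
      intro x
      have h0 := hrelμ (a * x)
      have h1 : ∑ i ∈ Finset.range (n + 1), (μ.coeff i : K) * (E ^ i) (a * x)
          = ∑ i ∈ Finset.range (n + 1), ∑ k ∈ Finset.range (i + 1),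
              (i.choose k : K) * (μ.coeff i : K) * ((E ^ k) a * (E ^ (i - k)) x) := by
        refine Finset.sum_congr rfl fun i _ => ?_
        rw [iter_leibniz D T hT, Finset.mul_sum]
        refine Finset.sum_congr rfl fun k _ => ?_
        rw [nsmul_eq_mul]
        ring
      rw [h1] at h0
      have hsw1 := tri_swap1 n
        (fun i k => (i.choose k : K) * (μ.coeff i : K) * ((E ^ k) a * (E ^ (i - k)) x))
      beta_reduce at hsw1
      rw [hsw1, Finset.sum_range_succ'] at h0
      have h2 : ∑ j ∈ Finset.range (n + 1 - 0),
          ((0 + j).choose 0 : K) * (μ.coeff (0 + j) : K) * ((E ^ 0) a * (E ^ (0 + j - 0)) x)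
            = 0 := by
        have hterm : ∀ j ∈ Finset.range (n + 1), ((0 + j).choose 0 : K) * (μ.coeff (0 + j) : K)
            * ((E ^ 0) a * (E ^ (0 + j - 0)) x) = a * ((μ.coeff j : K) * (E ^ j) x) := by
          intro j _
          simp only [Nat.zero_add, Nat.choose_zero_right, Nat.cast_one, one_mul, pow_zero,
            Module.End.one_apply, Nat.sub_zero]
          ring
        rw [Nat.sub_zero, Finset.sum_congr rfl hterm, ← Finset.mul_sum, hrelμ, mul_zero]
      rw [h2, add_zero] at h0
      -- clean indices
      have h3 : ∑ k ∈ Finset.range n, ∑ j ∈ Finset.range (n + 1 - (k + 1)),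
            ((k + 1 + j).choose (k + 1) : K) * (μ.coeff (k + 1 + j) : K)
              * ((E ^ (k + 1)) a * (E ^ (k + 1 + j - (k + 1))) x)
          = ∑ k ∈ Finset.range n, ∑ j ∈ Finset.range (n - k),
            ((k + 1 + j).choose (k + 1) : K) * (μ.coeff (k + 1 + j) : K)
              * ((E ^ (k + 1)) a * (E ^ j) x) := by
        refine Finset.sum_congr rfl fun k _ => ?_
        rw [show n + 1 - (k + 1) = n - k from by omega]
        refine Finset.sum_congr rfl fun j _ => ?_
        rw [Nat.add_sub_cancel_left]
      rw [h3] at h0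
      have hsw2 := tri_swap2 n
        (fun k j => ((k + 1 + j).choose (k + 1) : K) * (μ.coeff (k + 1 + j) : K)
          * ((E ^ (k + 1)) a * (E ^ j) x))
      beta_reduce at hsw2
      rw [hsw2] at h0
      rw [← h0]
      refine Finset.sum_congr rfl fun j _ => ?_
      rw [Finset.sum_mul]
      refine Finset.sum_congr rfl fun k _ => ?_
      ring
    intro j hj
    set ca : ℕ → K := fun j => ∑ k ∈ Finset.range (n - j),
      ((k + 1 + j).choose (k + 1) : K) * (μ.coeff (k + 1 + j) : K) * (E ^ (k + 1)) a with hcadef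
    set qa : Polynomial K := ∑ k ∈ Finset.range n, Polynomial.C (ca k) * Polynomial.X ^ k with hqa
    have hqacoeff : ∀ i, qa.coeff i = if i < n then ca i else 0 := fun i =>
      coeff_sum_C_mul_X_pow n ca i
    have hqadeg : qa.natDegree < n := by
      have : qa.natDegree ≤ n - 1 :=
        natDegree_sum_le_of_forall_le _ _ fun k hk =>
          (natDegree_C_mul_X_pow_le _ _).trans (by rw [Finset.mem_range] at hk; omega)
      omega
    have hqarel : ∀ x : K, ∑ k ∈ Finset.range n, qa.coeff k * (E ^ k) x = 0 := by
      intro x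
      rw [Finset.sum_congr rfl (fun k hk => by rw [hqacoeff, if_pos (Finset.mem_range.mp hk)])]
      exact key x
    have hqa0 : qa = 0 := indep_lemma D hF T hT halg qa.natDegree qa rfl hqadeg hqarel
    have h4 := hqacoeff j
    rw [hqa0, Polynomial.coeff_zero, if_pos hj] at h4
    exact h4.symm
  -- coefficient vanishing in F
  have hCharF : CharP F p := ⟨fun x => by
    rw [← map_eq_zero_iff F.subtype Subtype.val_injective, map_natCast]
    exact CharP.cast_eq_zero_iff K p x⟩
  have hchoose : ∀ i k : ℕ, 1 ≤ k → k < i → i ≤ n → (i.choose k : F) * μ.coeff i = 0 := by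
    intro i k hk1 hki hin
    set j : ℕ := i - k with hj
    have hj1 : 1 ≤ j := by omega
    have hjn : j < n := by omega
    set hp : Polynomial F := ∑ k' ∈ Finset.range (n - j),
      Polynomial.C (((k' + 1 + j).choose (k' + 1) : F) * μ.coeff (k' + 1 + j))
        * Polynomial.X ^ (k' + 1) with hhp
    have haevalhp : Polynomial.aeval E hp = 0 := by
      apply LinearMap.ext
      intro a
      rw [hhp, map_sum, LinearMap.sum_apply, LinearMap.zero_apply]
      have h2 : ∀ k', ((Polynomial.aeval E) (Polynomial.C
            (((k' + 1 + j).choose (k' + 1) : F) * μ.coeff (k' + 1 + j))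
            * Polynomial.X ^ (k' + 1))) a
          = ((k' + 1 + j).choose (k' + 1) : K) * (μ.coeff (k' + 1 + j) : K) * (E ^ (k' + 1)) a := by
        intro k'
        rw [haeval_term]
        push_cast
        ring
      rw [Finset.sum_congr rfl fun k' _ => h2 k']
      exact hca a j hjn
    have hhp0 : hp = 0 := by
      by_contra h0
      have hdvd := minpoly.dvd F E haevalhp
      have hlb := Polynomial.natDegree_le_of_dvd hdvd h0
      have hub : hp.natDegree ≤ n - j :=
        natDegree_sum_le_of_forall_le _ _ fun k' hk' =>
          (natDegree_C_mul_X_pow_le _ _).trans (by rw [Finset.mem_range] at hk'; omega)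
      rw [← hn] at hlb
      omega
    have hcf := coeff_sum_C_mul_X_pow_succ (n - j)
      (fun k' => ((k' + 1 + j).choose (k' + 1) : F) * μ.coeff (k' + 1 + j)) (k - 1)
    beta_reduce at hcf
    rw [← hhp, hhp0, Polynomial.coeff_zero, if_pos (by omega)] at hcf
    have e1 : k - 1 + 1 = k := by omega
    rw [e1] at hcf
    have e2 : k + j = i := by omega
    rw [e2] at hcf
    exact hcf.symm
  -- all nonzero coefficients sit at p-power indices
  have hppow : ∀ i : ℕ, i ≤ n → μ.coeff i ≠ 0 → ∃ v, i = p ^ v := by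
    intro i hin hne
    have hi1 : 1 ≤ i := by
      rcases Nat.eq_zero_or_pos i with h0 | h1
      · exact absurd (h0 ▸ hμ0) hne
      · exact h1
    refine isPPow_of_choose_dvd p i hi1 fun k hk1 hki => ?_
    have h := hchoose i k hk1 hki hin
    rcases mul_eq_zero.mp h with h' | h'
    · exact (CharP.cast_eq_zero_iff F p _).mp h'
    · exact absurd h' hne
  obtain ⟨m, hm⟩ := hppow n le_rfl (by
    rw [hn, hmonic.coeff_natDegree]
    exact one_ne_zero)
  have hp2 : 2 ≤ p := (Fact.out : p.Prime).two_le
  have hinj : Function.Injective (p ^ · : ℕ → ℕ) := Nat.pow_right_injective hp2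
  refine ⟨m, fun i => μ.coeff (p ^ (i : ℕ)), ?_⟩
  refine Polynomial.ext fun j => ?_
  rw [Polynomial.coeff_add, Polynomial.coeff_X_pow, Polynomial.finset_sum_coeff]
  simp only [Polynomial.coeff_C_mul, Polynomial.coeff_X_pow, mul_ite, mul_one, mul_zero]
  by_cases hj : j = p ^ m
  · rw [if_pos hj, Finset.sum_eq_zero (fun i _ => if_neg (fun h => by
      have := hinj (show p ^ m = p ^ (i : ℕ) from by rw [← hj, h])
      omega)), add_zero, hj, ← hm, hn]
    exact hmonic.coeff_natDegree
  · rw [if_neg hj, zero_add]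
    by_cases hv : ∃ v : Fin m, j = p ^ (v : ℕ)
    · obtain ⟨v, hvj⟩ := hv
      rw [Finset.sum_eq_single_of_mem v (Finset.mem_univ v)
        (fun i _ hiv => if_neg (fun h => hiv (Fin.ext (hinj (show p ^ (i : ℕ) = p ^ (v : ℕ) from by rw [← h, hvj]))))),
        if_pos hvj, hvj]
    · rw [Finset.sum_eq_zero fun i _ => if_neg fun h => hv ⟨i, h⟩]
      rcases le_or_gt j n with hjn | hjn
      · by_contra hne
        obtain ⟨v, hv'⟩ := hppow j hjn hne
        have hvm : v < m := by
          have hlt : p ^ v < p ^ m := by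
            rw [← hv', ← hm]
            rcases lt_or_eq_of_le hjn with h | h
            · exact h
            · exact absurd (h.trans hm) hj
          exact (Nat.pow_lt_pow_iff_right hp2).mp hlt
        exact hv ⟨⟨v, hvm⟩, hv'⟩
      · exact Polynomial.coeff_eq_zero_of_natDegree_lt (by omega)
end
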